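/- arXiv:0801.3423 — 2 statements merged into one kernel-verified Lean document; each statement's English description precedes it below -/
import Mathlib

section
/- Let G be a finite group acting faithfully on a set X, and suppose every element of order p (p a prime dividing |G|) fixes exactly one point of X. Let S_p be a Sylow p-subgroup of G and let ζ be a nontrivial element of the center of S_p. Then every element of S_p fixes the unique fixed point of ζ; in particular all nontrivial elements of S_p have the same unique fixed point. -/
/-!
A point fixed by `g` is moved by any `h` commuting with `g` to another point fixed by `g`;
so when `g` has a unique fixed point, the whole centralizer of `g` fixes it. Some power `η` of
`ζ` has order `p`, hence a unique fixed point `x₀`. As `ζ` and all of `S_p` commute with `η`,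
they fix `x₀`, and every fixed point of `ζ` is fixed by `η`, hence equals `x₀`.
-/

theorem exists_orderOf_pow_eq_prime {G : Type*} [Monoid G] {p n : ℕ} [Fact p.Prime] {g : G}
    (hg : orderOf g = p ^ n) (hg1 : g ≠ 1) : ∃ k, orderOf (g ^ k) = p := by
  have hn : n ≠ 0 := by
    rintro rfl
    exact hg1 (orderOf_eq_one_iff.mp (by simpa using hg))
  refine ⟨orderOf g / p, orderOf_pow_orderOf_div ?_ ?_⟩
  · simp [hg, (Fact.out : p.Prime).ne_zero]
  · exact hg ▸ dvd_pow_self p hn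

theorem MulAction.smul_eq_self_of_commute_of_fixed_unique {G X : Type*} [Group G]
    [MulAction G X] {g h : G} {x : X} (hgh : Commute g h) (hx : g • x = x)
    (huniq : ∀ y : X, g • y = y → y = x) : h • x = x :=
  huniq _ (by rw [← mul_smul, hgh.eq, mul_smul, hx])

theorem stmt_1_general (p : ℕ) [Fact p.Prime] (G : Type*) [Group G]
    (X : Type*) [MulAction G X]
    (hfix : ∀ g : G, orderOf g = p → ∃! x : X, g • x = x)
    (Sp : Sylow p G) (ζ : G) (hζS : ζ ∈ (Sp : Subgroup G)) (hζ1 : ζ ≠ 1)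
    (hζcentral : ∀ s ∈ (Sp : Subgroup G), s * ζ = ζ * s) :
    (∃! x : X, ζ • x = x) ∧
      ∀ x : X, ζ • x = x → ∀ s ∈ (Sp : Subgroup G), s • x = x := by
  obtain ⟨n, hn⟩ := IsPGroup.iff_orderOf.mp Sp.isPGroup' ⟨ζ, hζS⟩
  obtain ⟨k, hk⟩ := exists_orderOf_pow_eq_prime (Subgroup.orderOf_mk ζ hζS ▸ hn) hζ1
  obtain ⟨x₀, hx₀, huniq⟩ := hfix (ζ ^ k) hk
  have hfixed_eq : ∀ x : X, ζ • x = x → x = x₀ := fun x hx =>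
    huniq x (by simpa using MulAction.mem_fixedBy_zpow (g := ζ) hx k)
  have hζx₀ : ζ • x₀ = x₀ :=
    MulAction.smul_eq_self_of_commute_of_fixed_unique (Commute.self_pow ζ k).symm hx₀ huniq
  refine ⟨⟨x₀, hζx₀, hfixed_eq⟩, fun x hx s hs => ?_⟩
  rw [hfixed_eq x hx]
  exact MulAction.smul_eq_self_of_commute_of_fixed_unique
    (Commute.pow_right (hζcentral s hs) k).symm hx₀ huniq

/-- If every element of order `p` of a finite group `G` acting faithfully on `X`
has exactly one fixed point, and `ζ` is a nontrivial central element of a Sylow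
`p`-subgroup `S_p`, then every element of `S_p` fixes the (unique) fixed point of `ζ`. -/
theorem stmt_1 (p : ℕ) [Fact p.Prime] (G : Type*) [Group G] [Finite G]
    (X : Type*) [MulAction G X] [FaithfulSMul G X]
    (hpdvd : p ∣ Nat.card G)
    (hfix : ∀ g : G, orderOf g = p → ∃! x : X, g • x = x)
    (Sp : Sylow p G) (ζ : G) (hζS : ζ ∈ (Sp : Subgroup G)) (hζ1 : ζ ≠ 1)
    (hζcentral : ∀ s ∈ (Sp : Subgroup G), s * ζ = ζ * s) :
    (∃! x : X, ζ • x = x) ∧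
      ∀ x : X, ζ • x = x → ∀ s ∈ (Sp : Subgroup G), s • x = x :=
  stmt_1_general p G X hfix Sp ζ hζS hζ1 hζcentral
end

section
/- Let q be a power of 2 and w an odd prime with q + 1 = w^k for a positive integer k. Then either k = 1, or (k, q, w) = (2, 8, 3). -/
private lemma geom_parity (w : ℕ) (hw : w % 2 = 1) :
    ∀ n, (∑ i ∈ Finset.range n, w ^ i) % 2 = n % 2
  | 0 => rfl
  | n + 1 => by
    rw [Finset.sum_range_succ]
    have h1 : w ^ n % 2 = 1 := by
      rw [Nat.pow_mod, hw, one_pow]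
      rfl
    have h2 := geom_parity w hw n
    omega

/-- Special case of Mihailescu's theorem (Catalan): if `q` is a power of `2` and
`q + 1 = w^k` with `w` an odd prime and `k ≥ 1`, then `k = 1` or `(k,q,w) = (2,8,3)`. -/
theorem stmt_8 (q w k : ℕ) (hq : ∃ r : ℕ, q = 2 ^ r) (hw : w.Prime) (hwodd : Odd w)
    (hk : 1 ≤ k) (h : q + 1 = w ^ k) :
    k = 1 ∨ (k = 2 ∧ q = 8 ∧ w = 3) := by
  obtain ⟨r, rfl⟩ := hq
  rcases eq_or_lt_of_le hk with hk1 | hk2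
  · exact Or.inl hk1.symm
  have hw2 : 2 ≤ w := hw.two_le
  have hw3 : 3 ≤ w := by
    obtain ⟨t, ht⟩ := hwodd; omega
  rcases Nat.even_or_odd k with hke | hko
  · -- k even : k = 2m
    obtain ⟨m, rfl⟩ := hke
    have hm : 1 ≤ m := by omega
    have hx3 : 3 ≤ w ^ m := le_trans hw3 (Nat.le_self_pow (by omega) w)
    have hxodd : (w ^ m) % 2 = 1 := by
      rw [Nat.pow_mod, Nat.odd_iff.mp hwodd, one_pow]
      rfl
    obtain ⟨y, hy⟩ : ∃ y, w ^ m = y + 3 := ⟨w ^ m - 3, by omega⟩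
    have hyeven : y % 2 = 0 := by omega
    have hq' : 2 ^ r = (y + 2) * (y + 4) := by
      have hsq : w ^ (m + m) = (w ^ m) * (w ^ m) := by rw [pow_add]
      rw [hy] at hsq
      rw [hsq] at h
      nlinarith [h]
    have hda : (y + 2) ∣ 2 ^ r := ⟨y + 4, hq'⟩
    have hdb : (y + 4) ∣ 2 ^ r := ⟨y + 2, by linarith [hq', Nat.mul_comm (y+2) (y+4)]⟩
    obtain ⟨a, -, ha⟩ := (Nat.dvd_prime_pow Nat.prime_two).mp hda
    obtain ⟨b, -, hb⟩ := (Nat.dvd_prime_pow Nat.prime_two).mp hdb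
    have ha1 : 1 ≤ a := by
      by_contra hc
      interval_cases a <;> omega
    have hb2 : 2 ≤ b := by
      by_contra hc
      interval_cases b <;> simp_all <;> omega
    obtain ⟨a', rfl⟩ : ∃ a', a = a' + 1 := ⟨a - 1, by omega⟩
    obtain ⟨b', rfl⟩ : ∃ b', b = b' + 2 := ⟨b - 2, by omega⟩
    have key : 2 * 2 ^ b' = 2 ^ a' + 1 := by
      have e1 : 2 ^ (a' + 1) = 2 * 2 ^ a' := by ring
      have e2 : 2 ^ (b' + 2) = 4 * 2 ^ b' := by ring
      omega
    have ha0 : a' = 0 := by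
      by_contra hc
      have : 2 ∣ 2 ^ a' := dvd_pow_self 2 hc
      omega
    subst ha0
    have hy0 : y = 0 := by omega
    subst hy0
    -- w ^ m = 3
    have hw3' : w = 3 := by
      have hdvd : w ∣ 3 := by
        have h3 := dvd_pow_self w (show m ≠ 0 by omega)
        rw [hy] at h3
        simpa using h3
      have := (Nat.prime_dvd_prime_iff_eq hw Nat.prime_three).mp hdvd
      exact this
    subst hw3'
    have hm1 : m = 1 := by
      have : (3:ℕ) ^ m = 3 ^ 1 := by simpa using hy
      exact Nat.pow_right_injective (by norm_num) this
    subst hm1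
    right
    refine ⟨rfl, by omega, rfl⟩
  · -- k odd
    exfalso
    set S := ∑ i ∈ Finset.range k, w ^ i with hS
    have hgeom : (S : ℤ) * ((w : ℤ) - 1) = (w : ℤ) ^ k - 1 := by
      have := geom_sum_mul (w : ℤ) k
      simpa [hS] using this
    have hcast : ((2:ℤ) ^ r) = (w : ℤ) ^ k - 1 := by
      have := congrArg (fun n : ℕ => (n : ℤ)) h
      push_cast at this
      linarith
    have hSdvd : S ∣ 2 ^ r := by
      have : (S : ℤ) ∣ (2 : ℤ) ^ r := ⟨(w : ℤ) - 1, by linarith [hgeom, hcast]⟩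
      exact_mod_cast this
    obtain ⟨j, -, hj⟩ := (Nat.dvd_prime_pow Nat.prime_two).mp hSdvd
    have hSodd : S % 2 = 1 := by
      have h1 := geom_parity w (Nat.odd_iff.mp hwodd) k
      have h2 := Nat.odd_iff.mp hko
      rw [← hS] at h1
      omega
    have hj0 : j = 0 := by
      by_contra hc
      have : 2 ∣ 2 ^ j := dvd_pow_self 2 hc
      omega
    subst hj0
    have hS1 : S = 1 := by simpa using hj
    rw [hS1] at hgeom
    norm_num at hgeom
    have hwk : (w : ℤ) ^ 1 = (w : ℤ) ^ k := by rw [pow_one]; linarith [hgeom, hcast]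
    have hwk' : w ^ 1 = w ^ k := by exact_mod_cast hwk
    have := Nat.pow_right_injective hw2 hwk'
    omega
end
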